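/- arXiv:1810.09027 — 3 statements merged into one kernel-verified Lean document; each statement's English description precedes it below -/
import Mathlib

section
/- Thorup-Zwick query correctness: Let u,v be vertices and define w_0 = p_0(u) = u. Iteratively, for i = 0,1,2,..., if w_i ∈ B(v) stop; otherwise set w_{i+1} = p_{i+1}(v or u alternating). Formally: there is an index i ≤ k-1 and a vertex w ∈ A_i with w ∈ B(u') ∩ {p_i(u')} and w ∈ B(v') for {u',v'} = {u,v}, such that d(u',w) + d(w,v') ≤ (2k-1)·d(u,v). Hence the Thorup-Zwick distance estimate d'(u,v) := d(u',w)+d(w,v') satisfies d(u,v) ≤ d'(u,v) ≤ (2k-1)·d(u,v). -/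
open ENNReal
open scoped Classical

/-- The distance from `u` to a set `S` (`⊤` if `S` is empty). -/
noncomputable def distToSet {V : Type*} (d : V → V → ℝ≥0∞) (S : Set V) (u : V) : ℝ≥0∞ :=
  ⨅ x ∈ S, d u x

/-- The level-`i` bunch of `u`: `B_i(u) = { x ∈ A_i : d(u,x) < d(u, A_{i+1}) }`. -/
def bunchLevel {V : Type*} (d : V → V → ℝ≥0∞) (A : ℕ → Set V) (i : ℕ) (u : V) : Set V :=
  {x ∈ A i | d u x < distToSet d (A (i + 1)) u}

/-- The bunch of `u`: `B(u) = ∪_{i=0}^{k-1} B_i(u)`. -/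
def bunch {V : Type*} (d : V → V → ℝ≥0∞) (A : ℕ → Set V) (k : ℕ) (u : V) : Set V :=
  ⋃ i ∈ Finset.range k, bunchLevel d A i u

/-- Thorup-Zwick query correctness: there is a level `i ≤ k-1` and an orientation
`{u',v'} = {u,v}` such that `w = p_i(u') ∈ B(v')` and the resulting estimate
`d'(u,v) = d(u',w) + d(w,v')` satisfies `d(u,v) ≤ d'(u,v) ≤ (2k-1)·d(u,v)`. -/
theorem stmt3 {V : Type*} [Fintype V] (d : V → V → ℝ≥0∞) (k : ℕ) (hk : 1 ≤ k)
    (A : ℕ → Set V) (p : ℕ → V → V)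
    (hfin : ∀ x y : V, d x y ≠ ⊤)
    -- d is the shortest-path metric of a connected weighted graph
    (hself : ∀ x : V, d x x = 0)
    (hdsymm : ∀ x y : V, d x y = d y x)
    (htri : ∀ x y z : V, d x z ≤ d x y + d y z)
    (hA0 : A 0 = Set.univ)
    (hchain : ∀ i, A (i + 1) ⊆ A i)
    (hAk : A k = ∅)
    (hAk1 : (A (k - 1)).Nonempty)
    (hpmem : ∀ i, i ≤ k - 1 → ∀ u, p i u ∈ A i)
    (hpdist : ∀ i, i ≤ k - 1 → ∀ u, d u (p i u) = distToSet d (A i) u)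
    -- the query starts with w₀ = p₀(u) = u
    (hp0 : ∀ u : V, p 0 u = u)
    (u v : V) :
    ∃ i ≤ k - 1, ∃ u' v' : V, ({u', v'} : Set V) = {u, v} ∧
      p i u' ∈ bunch d A k v' ∧
      d u v ≤ d u' (p i u') + d (p i u') v' ∧
      d u' (p i u') + d (p i u') v' ≤ ((2 * k - 1 : ℕ) : ℝ≥0∞) * d u v := by
  set e : ℕ → V := fun j => if j % 2 = 0 then u else v with he
  have hpair : ∀ j, ({e j, e (j+1)} : Set V) = ({u, v} : Set V) := by
    intro j
    by_cases h : j % 2 = 0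
    · have h2 : (j+1) % 2 = 1 := by omega
      simp [he, h, h2]
    · have h2 : (j+1) % 2 = 0 := by omega
      simp [he, h, h2, Set.pair_comm]
  have hd : ∀ j, d (e j) (e (j+1)) = d u v := by
    intro j
    by_cases h : j % 2 = 0
    · have h2 : (j+1) % 2 = 1 := by omega
      simp [he, h, h2]
    · have h2 : (j+1) % 2 = 0 := by omega
      simp [he, h, h2, hdsymm v u]
  have main : ∀ j, j ≤ k - 1 →
      (∃ i ≤ k - 1, ∃ u' v' : V, ({u', v'} : Set V) = {u, v} ∧
        p i u' ∈ bunch d A k v' ∧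
        d u v ≤ d u' (p i u') + d (p i u') v' ∧
        d u' (p i u') + d (p i u') v' ≤ ((2 * k - 1 : ℕ) : ℝ≥0∞) * d u v) ∨
      d (e j) (p j (e j)) ≤ (j : ℝ≥0∞) * d u v := by
    intro j
    induction j with
    | zero => intro _; right; simp [he, hp0, hself]
    | succ n ih =>
      intro hle
      have hn : n ≤ k - 1 := le_trans (Nat.le_succ n) hle
      rcases ih hn with h | h
      · exact Or.inl h
      by_cases hb : p n (e n) ∈ bunch d A k (e (n+1))
      · left
        refine ⟨n, hn, e n, e (n+1), hpair n, hb, ?_, ?_⟩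
        · calc d u v = d (e n) (e (n+1)) := (hd n).symm
            _ ≤ d (e n) (p n (e n)) + d (p n (e n)) (e (n+1)) := htri _ _ _
        · have h2 : d (p n (e n)) (e (n+1)) ≤ d (e n) (p n (e n)) + d u v := by
            calc d (p n (e n)) (e (n+1)) ≤ d (p n (e n)) (e n) + d (e n) (e (n+1)) :=
                  htri _ _ _
              _ = d (e n) (p n (e n)) + d u v := by rw [hdsymm (p n (e n)) (e n), hd n]
          have hcast : ((n : ℝ≥0∞) * d u v) + ((n : ℝ≥0∞) * d u v + d u v)
              ≤ ((2 * k - 1 : ℕ) : ℝ≥0∞) * d u v := by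
            have : ((n : ℝ≥0∞) * d u v) + ((n : ℝ≥0∞) * d u v + d u v)
                = ((2 * n + 1 : ℕ) : ℝ≥0∞) * d u v := by
              push_cast; ring
            rw [this]
            exact mul_le_mul_left (Nat.cast_le.mpr (by omega : 2*n+1 ≤ 2*k-1)) _
          calc d (e n) (p n (e n)) + d (p n (e n)) (e (n+1))
              ≤ ((n : ℝ≥0∞) * d u v) + ((n : ℝ≥0∞) * d u v + d u v) := by
                gcongr
                exact h2.trans (by gcongr)
            _ ≤ _ := hcast
      · right
        have hnk : n < k := by omega
        have hwA : p n (e n) ∈ A n := hpmem n hn (e n)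
        have hnotlvl : p n (e n) ∉ bunchLevel d A n (e (n+1)) := by
          intro hmem
          exact hb (Set.mem_biUnion (Finset.mem_range.mpr hnk) hmem)
        have hge : distToSet d (A (n+1)) (e (n+1)) ≤ d (e (n+1)) (p n (e n)) := by
          by_contra hlt
          exact hnotlvl ⟨hwA, lt_of_not_ge hlt⟩
        have hstep : d (e (n+1)) (p (n+1) (e (n+1))) ≤ d (e (n+1)) (p n (e n)) := by
          rw [hpdist (n+1) hle]; exact hge
        calc d (e (n+1)) (p (n+1) (e (n+1)))
            ≤ d (e (n+1)) (p n (e n)) := hstep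
          _ ≤ d (e (n+1)) (e n) + d (e n) (p n (e n)) := htri _ _ _
          _ ≤ d u v + (n : ℝ≥0∞) * d u v := by
              rw [hdsymm (e (n+1)) (e n), hd n]; gcongr
          _ = ((n + 1 : ℕ) : ℝ≥0∞) * d u v := by push_cast; ring
  rcases main (k-1) le_rfl with h | h
  · exact h
  · have hkk : k - 1 + 1 = k := Nat.succ_pred_eq_of_pos hk
    have hwA : p (k-1) (e (k-1)) ∈ A (k-1) := hpmem (k-1) le_rfl (e (k-1))
    have htop : distToSet d (A ((k-1) + 1)) (e (k-1+1)) = ⊤ := by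
      rw [hkk]; simp [distToSet, hAk]
    have hmem : p (k-1) (e (k-1)) ∈ bunch d A k (e (k-1+1)) := by
      refine Set.mem_biUnion (Finset.mem_range.mpr (Nat.sub_lt hk one_pos)) ?_
      exact ⟨hwA, by rw [htop]; exact lt_top_iff_ne_top.mpr (hfin _ _)⟩
    refine ⟨k-1, le_rfl, e (k-1), e (k-1+1), hpair (k-1), hmem, ?_, ?_⟩
    · calc d u v = d (e (k-1)) (e (k-1+1)) := (hd (k-1)).symm
        _ ≤ _ := htri _ _ _
    · have h2 : d (p (k-1) (e (k-1))) (e (k-1+1))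
          ≤ d (e (k-1)) (p (k-1) (e (k-1))) + d u v := by
        calc d (p (k-1) (e (k-1))) (e (k-1+1))
            ≤ d (p (k-1) (e (k-1))) (e (k-1)) + d (e (k-1)) (e (k-1+1)) := htri _ _ _
          _ = _ := by rw [hdsymm (p (k-1) (e (k-1))) (e (k-1)), hd (k-1)]
      have : (((k-1 : ℕ)) : ℝ≥0∞) * d u v + ((((k-1 : ℕ)) : ℝ≥0∞) * d u v + d u v)
          ≤ ((2 * k - 1 : ℕ) : ℝ≥0∞) * d u v := by
        have heq : (((k-1 : ℕ)) : ℝ≥0∞) * d u v + ((((k-1 : ℕ)) : ℝ≥0∞) * d u v + d u v)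
            = ((2 * (k-1) + 1 : ℕ) : ℝ≥0∞) * d u v := by push_cast; ring
        rw [heq]
        exact mul_le_mul_left (Nat.cast_le.mpr (by omega : 2*(k-1)+1 ≤ 2*k-1)) _
      calc d (e (k-1)) (p (k-1) (e (k-1))) + d (p (k-1) (e (k-1))) (e (k-1+1))
          ≤ (((k-1 : ℕ)) : ℝ≥0∞) * d u v + ((((k-1 : ℕ)) : ℝ≥0∞) * d u v + d u v) := by
            gcongr
            exact h2.trans (by gcongr)
        _ ≤ _ := this
end

section
/- Triangle-inequality bound for approximate pivots: suppose w ∈ A_i, w ∉ B_i(v), i.e. d(v, A_{i+1}) ≤ d(v,w). Then d(v, p_{i+1}(v)) ≤ d(v,w) ≤ d(v,u) + d(u,w) for any u. In particular, in the Thorup-Zwick query induction, if at step i we have d(u, w_i) ≤ i·d(u,v) with w_i = p_i(u), and w_i ∉ B(v), then d(v, p_{i+1}(v)) ≤ (i+1)·d(u,v). -/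
open ENNReal
open scoped Classical

section Bunch

variable {V : Type*} {d : V → V → ℝ≥0∞} {A : ℕ → Set V} {i k : ℕ} {v w : V}

theorem distToSet_succ_le_of_notMem_bunchLevel (hw : w ∈ A i)
    (hwB : w ∉ bunchLevel d A i v) : distToSet d (A (i + 1)) v ≤ d v w :=
  not_lt.mp fun hlt => hwB ⟨hw, hlt⟩

theorem notMem_bunchLevel_of_notMem_bunch (hik : i < k) (hwB : w ∉ bunch d A k v) :
    w ∉ bunchLevel d A i v :=
  fun h => hwB (Set.mem_biUnion (Finset.mem_range.mpr hik) h)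

end Bunch

theorem stmt13_general {V : Type*} (d : V → V → ℝ≥0∞) (k : ℕ)
    (A : ℕ → Set V) (p : ℕ → V → V)
    (hdsymm : ∀ x y : V, d x y = d y x)
    (htri : ∀ x y z : V, d x z ≤ d x y + d y z)
    (hpmem : ∀ i, i ≤ k - 1 → ∀ u, p i u ∈ A i)
    (hpdist : ∀ i, i ≤ k - 1 → ∀ u, d u (p i u) = distToSet d (A i) u)
    (u v : V) (i : ℕ) (hi : i + 1 ≤ k - 1) :
    (∀ w : V, w ∈ A i → w ∉ bunchLevel d A i v →
      d v (p (i + 1) v) ≤ d v w ∧ d v w ≤ d v u + d u w) ∧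
    (d u (p i u) ≤ (i : ℝ≥0∞) * d u v → p i u ∉ bunch d A k v →
      d v (p (i + 1) v) ≤ ((i : ℝ≥0∞) + 1) * d u v) := by
  have pivot_le : ∀ w, w ∈ A i → w ∉ bunchLevel d A i v → d v (p (i + 1) v) ≤ d v w :=
    fun w hw hwB => (hpdist (i + 1) hi v).trans_le
      (distToSet_succ_le_of_notMem_bunchLevel hw hwB)
  refine ⟨fun w hw hwB => ⟨pivot_le w hw hwB, htri v u w⟩, fun hind hnotB => ?_⟩
  have hnotBi : p i u ∉ bunchLevel d A i v :=
    notMem_bunchLevel_of_notMem_bunch (by omega) hnotB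
  calc d v (p (i + 1) v) ≤ d v (p i u) := pivot_le _ (hpmem i (by omega) u) hnotBi
    _ ≤ d v u + d u (p i u) := htri v u (p i u)
    _ ≤ d u v + (i : ℝ≥0∞) * d u v := by rw [hdsymm v u]; gcongr
    _ = ((i : ℝ≥0∞) + 1) * d u v := by ring

/-- Triangle-inequality bound for approximate pivots: if `w ∈ A_i` but `w ∉ B_i(v)`
then `d(v, p_{i+1}(v)) ≤ d(v,w) ≤ d(v,u) + d(u,w)`; in particular, in the
Thorup-Zwick query induction, if `d(u, p_i(u)) ≤ i·d(u,v)` and `p_i(u) ∉ B(v)` then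
`d(v, p_{i+1}(v)) ≤ (i+1)·d(u,v)`. -/
theorem stmt13 {V : Type*} [Fintype V] (d : V → V → ℝ≥0∞) (k : ℕ) (hk : 1 ≤ k)
    (A : ℕ → Set V) (p : ℕ → V → V)
    (hfin : ∀ x y : V, d x y ≠ ⊤)
    (hself : ∀ x : V, d x x = 0)
    (hdsymm : ∀ x y : V, d x y = d y x)
    (htri : ∀ x y z : V, d x z ≤ d x y + d y z)
    (hchain : ∀ i, A (i + 1) ⊆ A i)
    (hpmem : ∀ i, i ≤ k - 1 → ∀ u, p i u ∈ A i)
    (hpdist : ∀ i, i ≤ k - 1 → ∀ u, d u (p i u) = distToSet d (A i) u)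
    (u v : V) (i : ℕ) (hi : i + 1 ≤ k - 1) :
    (∀ w : V, w ∈ A i → w ∉ bunchLevel d A i v →
      d v (p (i + 1) v) ≤ d v w ∧ d v w ≤ d v u + d u w) ∧
    (d u (p i u) ≤ (i : ℝ≥0∞) * d u v → p i u ∉ bunch d A k v →
      d v (p (i + 1) v) ≤ ((i : ℝ≥0∞) + 1) * d u v) :=
  stmt13_general d k A p hdsymm htri hpmem hpdist u v i hi
end

section
/- Distance sketch sufficiency: for vertices u,v, the Thorup-Zwick estimate d'(u,v) can be computed using only the sketch of u (the set {(w, d(u,w)) : w ∈ B(u) ∪ {p_0(u),...,p_{k-1}(u)}}) and the sketch of v. Formally, the value min over j and over the two orientations of { d(x, p_j(x)) + d(y, p_j(x)) : p_j(x) ∈ B(y), {x,y} = {u,v} } depends only on these two sketches, is always well defined (the min is over a nonempty set), and satisfies d(u,v) ≤ d'(u,v) ≤ (2k-1)·d(u,v). -/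
open ENNReal
open scoped Classical

/-!
If `p_i(u) ∉ B(v)` then `d(v, A_{i+1}) ≤ d(v, p_i(u)) ≤ d(u,v) + d(u, p_i(u))`, so the pivot
distance grows by at most `d(u,v)` each time the roles of `u` and `v` are swapped. Starting from
`p_0(u) = u`, after at most `k - 1` swaps a pivot `p_i(x)` with `d(x, p_i(x)) ≤ i·d(u,v)` lies in
the bunch of the other endpoint (at level `k - 1` every point does, as `A_k = ∅`), giving an
estimate of at most `(2i + 1)·d(u,v)`. The lower bound is the triangle inequality.
-/

section ThorupZwick

variable {V : Type*} {d : V → V → ℝ≥0∞} {A : ℕ → Set V} {p : ℕ → V → V} {k : ℕ}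

lemma distToSet_empty (u : V) : distToSet d ∅ u = ⊤ := by
  simp [distToSet]

lemma mem_bunch_iff {w y : V} :
    w ∈ bunch d A k y ↔ ∃ i < k, w ∈ A i ∧ d y w < distToSet d (A (i + 1)) y := by
  simp [bunch, bunchLevel, and_left_comm]

lemma distToSet_le_of_notMem_bunch {i : ℕ} {w y : V} (hi : i < k) (hw : w ∈ A i)
    (hnot : w ∉ bunch d A k y) : distToSet d (A (i + 1)) y ≤ d y w :=
  not_lt.mp fun hlt => hnot (mem_bunch_iff.mpr ⟨i, hi, hw, hlt⟩)

lemma succ_lt_of_notMem_bunch (hfin : ∀ x y : V, d x y ≠ ⊤) (hAk : A k = ∅) {i : ℕ} {w y : V}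
    (hi : i < k) (hw : w ∈ A i) (hnot : w ∉ bunch d A k y) : i + 1 < k := by
  by_contra hge
  have hlast : A (i + 1) = ∅ := by rwa [show i + 1 = k by omega]
  have := distToSet_le_of_notMem_bunch hi hw hnot
  rw [hlast, distToSet_empty, top_le_iff] at this
  exact hfin y w this

variable (d A p k)

/-- The Thorup–Zwick estimate `d'(u, v)` is the infimum of this set. -/
def sketchEstimates (u v : V) : Set ℝ≥0∞ :=
  { e : ℝ≥0∞ | ∃ j ≤ k - 1, ∃ x y : V,
    ((x, y) = (u, v) ∨ (x, y) = (v, u)) ∧ p j x ∈ bunch d A k y ∧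
    e = d x (p j x) + d (p j x) y }

variable {d A p k}

lemma sketchEstimates_comm (u v : V) :
    sketchEstimates d A p k u v = sketchEstimates d A p k v u := by
  ext e
  simp only [sketchEstimates, Set.mem_ofPred_eq, or_comm]

lemma mem_sketchEstimates {j : ℕ} {u v : V} (hj : j ≤ k - 1) (hmem : p j u ∈ bunch d A k v) :
    d u (p j u) + d (p j u) v ∈ sketchEstimates d A p k u v :=
  ⟨j, hj, u, v, Or.inl rfl, hmem, rfl⟩

lemma le_of_mem_sketchEstimates (hsymm : ∀ x y : V, d x y = d y x)
    (htri : ∀ x y z : V, d x z ≤ d x y + d y z) {u v : V} {e : ℝ≥0∞}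
    (he : e ∈ sketchEstimates d A p k u v) : d u v ≤ e := by
  obtain ⟨j, -, x, y, hxy, -, rfl⟩ := he
  have hdxy : d x y = d u v := by
    rcases hxy with h | h <;> simp only [Prod.mk.injEq] at h <;> obtain ⟨rfl, rfl⟩ := h
    exacts [rfl, hsymm _ _]
  exact hdxy ▸ htri _ _ _

lemma add_le_of_dist_le_mul (hsymm : ∀ x y : V, d x y = d y x)
    (htri : ∀ x y z : V, d x z ≤ d x y + d y z) {i : ℕ} (hi : i < k) {u v w : V}
    (hw : d u w ≤ i * d u v) : d u w + d w v ≤ ((2 * k - 1 : ℕ) : ℝ≥0∞) * d u v :=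
  calc d u w + d w v ≤ d u w + (d u w + d u v) := by
        gcongr
        exact hsymm w u ▸ htri w u v
    _ ≤ i * d u v + (i * d u v + d u v) := by gcongr
    _ = ((2 * i + 1 : ℕ) : ℝ≥0∞) * d u v := by push_cast; ring
    _ ≤ ((2 * k - 1 : ℕ) : ℝ≥0∞) * d u v := by gcongr; omega

theorem exists_mem_sketchEstimates_le (hfin : ∀ x y : V, d x y ≠ ⊤)
    (hsymm : ∀ x y : V, d x y = d y x) (htri : ∀ x y z : V, d x z ≤ d x y + d y z)
    (hAk : A k = ∅) (hpmem : ∀ i, i ≤ k - 1 → ∀ u, p i u ∈ A i)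
    (hpdist : ∀ i, i ≤ k - 1 → ∀ u, d u (p i u) = distToSet d (A i) u)
    (i : ℕ) (hi : i < k) (u v : V) (hpiv : d u (p i u) ≤ i * d u v) :
    ∃ e ∈ sketchEstimates d A p k u v, e ≤ ((2 * k - 1 : ℕ) : ℝ≥0∞) * d u v := by
  by_cases hmem : p i u ∈ bunch d A k v
  · exact ⟨_, mem_sketchEstimates (by omega) hmem, add_le_of_dist_le_mul hsymm htri hi hpiv⟩
  have hw := hpmem i (by omega) u
  have hi' := succ_lt_of_notMem_bunch hfin hAk hi hw hmem
  have hpiv' : d v (p (i + 1) v) ≤ (i + 1 : ℕ) * d v u :=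
    calc d v (p (i + 1) v) = distToSet d (A (i + 1)) v := hpdist (i + 1) (by omega) v
      _ ≤ d v (p i u) := distToSet_le_of_notMem_bunch hi hw hmem
      _ ≤ d v u + d u (p i u) := htri _ _ _
      _ ≤ d v u + i * d v u := by rw [hsymm v u]; gcongr
      _ = (i + 1 : ℕ) * d v u := by push_cast; ring
  rw [sketchEstimates_comm, hsymm u v]
  exact exists_mem_sketchEstimates_le hfin hsymm htri hAk hpmem hpdist (i + 1) hi' v u hpiv'
termination_by k - i

end ThorupZwick

theorem stmt16_general {V : Type*} (d : V → V → ℝ≥0∞) (k : ℕ) (hk : 1 ≤ k)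
    (A : ℕ → Set V) (p : ℕ → V → V)
    (hfin : ∀ x y : V, d x y ≠ ⊤)
    (hself : ∀ x : V, d x x = 0)
    (hdsymm : ∀ x y : V, d x y = d y x)
    (htri : ∀ x y z : V, d x z ≤ d x y + d y z)
    (hAk : A k = ∅)
    (hpmem : ∀ i, i ≤ k - 1 → ∀ u, p i u ∈ A i)
    (hpdist : ∀ i, i ≤ k - 1 → ∀ u, d u (p i u) = distToSet d (A i) u)
    (hp0 : ∀ u : V, p 0 u = u)
    (u v : V) :
    ({ e : ℝ≥0∞ | ∃ j ≤ k - 1, ∃ x y : V,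
        ((x, y) = (u, v) ∨ (x, y) = (v, u)) ∧ p j x ∈ bunch d A k y ∧
        e = d x (p j x) + d (p j x) y }).Nonempty ∧
    d u v ≤ sInf { e : ℝ≥0∞ | ∃ j ≤ k - 1, ∃ x y : V,
        ((x, y) = (u, v) ∨ (x, y) = (v, u)) ∧ p j x ∈ bunch d A k y ∧
        e = d x (p j x) + d (p j x) y } ∧
    sInf { e : ℝ≥0∞ | ∃ j ≤ k - 1, ∃ x y : V,
        ((x, y) = (u, v) ∨ (x, y) = (v, u)) ∧ p j x ∈ bunch d A k y ∧
        e = d x (p j x) + d (p j x) y } ≤ ((2 * k - 1 : ℕ) : ℝ≥0∞) * d u v := by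
  change (sketchEstimates d A p k u v).Nonempty ∧ d u v ≤ sInf (sketchEstimates d A p k u v) ∧
    sInf (sketchEstimates d A p k u v) ≤ ((2 * k - 1 : ℕ) : ℝ≥0∞) * d u v
  have hpiv0 : d u (p 0 u) ≤ (0 : ℕ) * d u v := by simp [hp0, hself]
  obtain ⟨e, he, hle⟩ :=
    exists_mem_sketchEstimates_le hfin hdsymm htri hAk hpmem hpdist 0 hk u v hpiv0
  exact ⟨⟨e, he⟩, le_sInf fun _ => le_of_mem_sketchEstimates hdsymm htri,
    (sInf_le he).trans hle⟩

/-- Distance sketch sufficiency: the set of candidate Thorup-Zwick estimates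
`{ d(x, p_j(x)) + d(p_j(x), y) : j ≤ k-1, {x,y} = {u,v}, p_j(x) ∈ B(y) }`, which is
computable from the sketches of `u` and `v` alone, is nonempty (since
`p_{k-1}(u) ∈ A_{k-1} ⊆ B(v)`), and its infimum `d'(u,v)` satisfies
`d(u,v) ≤ d'(u,v) ≤ (2k-1)·d(u,v)`. -/
theorem stmt16 {V : Type*} [Fintype V] (d : V → V → ℝ≥0∞) (k : ℕ) (hk : 1 ≤ k)
    (A : ℕ → Set V) (p : ℕ → V → V)
    (hfin : ∀ x y : V, d x y ≠ ⊤)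
    (hself : ∀ x : V, d x x = 0)
    (hdsymm : ∀ x y : V, d x y = d y x)
    (htri : ∀ x y z : V, d x z ≤ d x y + d y z)
    (hA0 : A 0 = Set.univ)
    (hchain : ∀ i, A (i + 1) ⊆ A i)
    (hAk : A k = ∅)
    (hAk1 : (A (k - 1)).Nonempty)
    (hpmem : ∀ i, i ≤ k - 1 → ∀ u, p i u ∈ A i)
    (hpdist : ∀ i, i ≤ k - 1 → ∀ u, d u (p i u) = distToSet d (A i) u)
    (hp0 : ∀ u : V, p 0 u = u)
    (u v : V) :
    ({ e : ℝ≥0∞ | ∃ j ≤ k - 1, ∃ x y : V,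
        ((x, y) = (u, v) ∨ (x, y) = (v, u)) ∧ p j x ∈ bunch d A k y ∧
        e = d x (p j x) + d (p j x) y }).Nonempty ∧
    d u v ≤ sInf { e : ℝ≥0∞ | ∃ j ≤ k - 1, ∃ x y : V,
        ((x, y) = (u, v) ∨ (x, y) = (v, u)) ∧ p j x ∈ bunch d A k y ∧
        e = d x (p j x) + d (p j x) y } ∧
    sInf { e : ℝ≥0∞ | ∃ j ≤ k - 1, ∃ x y : V,
        ((x, y) = (u, v) ∨ (x, y) = (v, u)) ∧ p j x ∈ bunch d A k y ∧
        e = d x (p j x) + d (p j x) y } ≤ ((2 * k - 1 : ℕ) : ℝ≥0∞) * d u v :=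
  stmt16_general d k hk A p hfin hself hdsymm htri hAk hpmem hpdist hp0 u v
end
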